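/- arXiv:1605.05713 — 3 statements merged into one kernel-verified Lean document; each statement's English description precedes it below -/
import Mathlib

section
/- Let n be odd, k ≥ 3, and suppose all component functions g₀,…,g_{2^{k−1}−1} of f : 𝔽₂ⁿ → ℤ_{2^k} are semi-bent. Fix u ∈ 𝔽₂ⁿ. Then there exist r ∈ {0,…,2^{k−2}−1} and a sign ε ∈ {1,−1} such that W_{g_j}(u) = ε·2^{(n+1)/2}·(−1)^{z_r·z_j} for all 0 ≤ j ≤ 2^{k−2}−1 and W_{g_j}(u) = 0 for all 2^{k−2} ≤ j ≤ 2^{k−1}−1, if and only if: W_{g_j}(u) = 0 for all 2^{k−2} ≤ j ≤ 2^{k−1}−1, W_{g_j}(u) ≠ 0 for all 0 ≤ j ≤ 2^{k−2}−1, and for any four pairwise distinct integers j, c, l, v ∈ {0,…,2^{k−2}−1} with z_j ⊕ z_c ⊕ z_l ⊕ z_v = 0 one has W_{g_j}(u)·W_{g_c}(u) = W_{g_l}(u)·W_{g_v}(u). -/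
open Finset

/-- Boolean functions on `𝔽₂ⁿ`. -/
abbrev BF (n : ℕ) := (Fin n → ZMod 2) → ZMod 2

/-- Dot product on `𝔽₂ⁿ`. -/
def bdot {n : ℕ} (u x : Fin n → ZMod 2) : ZMod 2 := ∑ i, u i * x i

/-- Walsh–Hadamard transform of a Boolean function. -/
def walsh {n : ℕ} (g : BF n) (u : Fin n → ZMod 2) : ℤ :=
  ∑ x : Fin n → ZMod 2, (-1 : ℤ) ^ (g x + bdot u x).val

/-- Generalized Walsh–Hadamard transform of `f : 𝔽₂ⁿ → ℤ_q`. -/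
noncomputable def gwht {n q : ℕ} (f : (Fin n → ZMod 2) → ZMod q) (u : Fin n → ZMod 2) : ℂ :=
  ∑ x : Fin n → ZMod 2,
    Complex.exp (2 * Real.pi * Complex.I / (q : ℂ)) ^ (f x).val * (-1 : ℂ) ^ (bdot u x).val

/-- `f : 𝔽₂ⁿ → ℤ_q` is gbent if `|H_f(u)| = 2^{n/2}` for all `u`. -/
def IsGbent {n q : ℕ} (f : (Fin n → ZMod 2) → ZMod q) : Prop :=
  ∀ u, ‖gwht f u‖ = (2 : ℝ) ^ ((n : ℝ) / 2)

/-- A Boolean function (in an even number `n` of variables) is bent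
if `|W_g(u)| = 2^{n/2}` for all `u`. -/
def IsBent {n : ℕ} (g : BF n) : Prop := ∀ u, |walsh g u| = 2 ^ (n / 2)

/-- A Boolean function (in an odd number `n` of variables) is semi-bent if
`W_g(u) ∈ {0, ±2^{(n+1)/2}}` for all `u`. -/
def IsSemiBent {n : ℕ} (g : BF n) : Prop :=
  ∀ u, walsh g u = 0 ∨ walsh g u = 2 ^ ((n + 1) / 2) ∨ walsh g u = -2 ^ ((n + 1) / 2)

/-- `gd` is the dual of the bent function `g`: `W_g(u) = 2^{n/2}(-1)^{gd(u)}`. -/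
def IsDual {n : ℕ} (g gd : BF n) : Prop :=
  ∀ u, walsh g u = 2 ^ (n / 2) * (-1 : ℤ) ^ (gd u).val

/-- The `t`-th binary digit of `j`, as an element of `𝔽₂`. -/
def bit (t j : ℕ) : ZMod 2 := if Nat.testBit j t then 1 else 0

/-- Dot product `z_r · z_j` of the binary representations (of length `m`) of `r` and `j`. -/
def zdot (m r j : ℕ) : ZMod 2 := ∑ t ∈ Finset.range m, bit t r * bit t j

/-- Entry `(r, j)` of the Sylvester–Hadamard matrix `H_{2^m}`, i.e. `(-1)^{z_r · z_j}`. -/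
def hadRow (m r j : ℕ) : ℤ := (-1 : ℤ) ^ (zdot m r j).val

/-- `a 0, …, a (k-1)` are the Boolean coordinate functions of `f : 𝔽₂ⁿ → ℤ_{2^k}`:
`f = a₀ + 2a₁ + ⋯ + 2^{k-1}a_{k-1}`. -/
def coordExpand {n : ℕ} (k : ℕ) (a : ℕ → BF n) (f : (Fin n → ZMod 2) → ZMod (2 ^ k)) : Prop :=
  ∀ x, f x = ∑ j ∈ Finset.range k, (2 : ZMod (2 ^ k)) ^ j * ((a j x).val : ZMod (2 ^ k))

/-- The `i`-th component function `g_i = a_{k-1} ⊕ i₀a₀ ⊕ ⋯ ⊕ i_{k-2}a_{k-2}`. -/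
def component {n : ℕ} (k : ℕ) (a : ℕ → BF n) (i : ℕ) : BF n :=
  fun x => a (k - 1) x + ∑ t ∈ Finset.range (k - 1), bit t i * a t x

/-- The affine space `a0 ⊕ ⟨a 0, …, a (m-1)⟩` of Boolean functions. -/
def affSpan {n : ℕ} (m : ℕ) (a0 : BF n) (a : ℕ → BF n) : Set (BF n) :=
  {g | ∃ c : ℕ → ZMod 2, g = fun x => a0 x + ∑ t ∈ Finset.range m, c t * a t x}

/-- Walsh–Hadamard transform for Boolean functions on `𝔽₂ⁿ × 𝔽₂^m`. -/
def walshP {n m : ℕ} (F : (Fin n → ZMod 2) → (Fin m → ZMod 2) → ZMod 2)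
    (u : Fin n → ZMod 2) (v : Fin m → ZMod 2) : ℤ :=
  ∑ x : Fin n → ZMod 2, ∑ y : Fin m → ZMod 2, (-1 : ℤ) ^ (F x y + bdot u x + bdot v y).val

/-!
Only the values `W j = W_{g_j}(u)` with `j < 2^{k-2}` matter, and by semi-bentness they lie
in `{0, ±c}` with `c = 2^{(n+1)/2}`. When none vanishes, the quadruple condition applied to
`(j, l, 0, j ⊕ l)` says that the signs `χ j = W j / W 0` form a character of `(𝔽₂^{k-2}, ⊕)`,
and every such character is a row `j ↦ (-1)^{z_r · z_j}` of the Sylvester–Hadamard matrix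
(take `z_r` to be the values of the character on the unit vectors `2^t`).
-/

lemma ZMod.neg_one_pow_val_add (x y : ZMod 2) :
    (-1 : ℤ) ^ (x + y).val = (-1) ^ x.val * (-1) ^ y.val := by
  revert x y; decide

lemma ZMod.neg_one_pow_val_injective :
    Function.Injective fun z : ZMod 2 => (-1 : ℤ) ^ z.val := by
  decide

lemma Nat.xor_two_pow_eq_add {a m : ℕ} (h : a < 2 ^ m) : a ^^^ 2 ^ m = a + 2 ^ m := by
  apply Nat.eq_of_testBit_eq
  intro i
  rw [Nat.testBit_xor, Nat.testBit_two_pow, add_comm, ← mul_one (2 ^ m),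
    Nat.testBit_two_pow_mul_add 1 h]
  rcases lt_trichotomy i m with hi | rfl | hi
  · simp [hi, hi.ne']
  · simp [Nat.testBit_lt_two_pow h]
  · have ha : a.testBit i = false :=
      Nat.testBit_lt_two_pow (h.trans_le (Nat.pow_le_pow_right two_pos hi.le))
    have h1 : (1 : ℕ).testBit (i - m) = false := by
      rw [← Bool.not_eq_true, Nat.testBit_one_eq_true_iff_self_eq_zero]
      omega
    simp [ha, h1, hi.ne, Nat.not_lt.mpr hi.le]

lemma bit_xor (t j c : ℕ) : bit t (j ^^^ c) = bit t j + bit t c := by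
  unfold bit
  rw [Nat.testBit_xor]
  cases j.testBit t <;> cases c.testBit t <;> decide

lemma bit_two_pow (t m : ℕ) : bit t (2 ^ m) = if m = t then 1 else 0 := by
  simp [bit, Nat.testBit_two_pow]

lemma bit_eq_zero_of_lt_two_pow {m t j : ℕ} (hj : j < 2 ^ m) (ht : m ≤ t) : bit t j = 0 := by
  simp [bit, Nat.testBit_lt_two_pow (hj.trans_le (Nat.pow_le_pow_right two_pos ht))]

lemma zdot_xor (m r j c : ℕ) : zdot m r (j ^^^ c) = zdot m r j + zdot m r c := by
  simp only [zdot, bit_xor, mul_add, sum_add_distrib]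

lemma hadRow_xor (m r j c : ℕ) : hadRow m r (j ^^^ c) = hadRow m r j * hadRow m r c := by
  simp only [hadRow, zdot_xor, ZMod.neg_one_pow_val_add]

lemma hadRow_ne_zero (m r j : ℕ) : hadRow m r j ≠ 0 := by
  simp [hadRow]

lemma exists_lt_two_pow_bit_eq (m : ℕ) (p : ℕ → ZMod 2) :
    ∃ r < 2 ^ m, ∀ t < m, bit t r = p t := by
  induction m with
  | zero => exact ⟨0, by norm_num, fun t ht => absurd ht t.not_lt_zero⟩
  | succ m ih =>
    obtain ⟨r, hr, hbit⟩ := ih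
    have hval : (p m).val ≤ 1 := Nat.le_of_lt_succ (ZMod.val_lt (p m))
    refine ⟨2 ^ m * (p m).val + r, by rw [pow_succ]; nlinarith, fun t ht => ?_⟩
    simp only [bit, Nat.testBit_two_pow_mul_add _ hr]
    rcases Nat.lt_succ_iff_lt_or_eq.mp ht with ht | rfl
    · simpa [ht, bit] using hbit t ht
    · rw [if_neg (lt_irrefl t), Nat.sub_self, Nat.testBit_zero]
      generalize p t = z
      revert z; decide

lemma eq_sum_bit_mul_of_xor_additive {m : ℕ} {b : ℕ → ZMod 2}
    (hb : ∀ j < 2 ^ m, ∀ c < 2 ^ m, b (j ^^^ c) = b j + b c) :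
    ∀ j < 2 ^ m, b j = ∑ t ∈ range m, bit t j * b (2 ^ t) := by
  induction m with
  | zero =>
    intro j hj
    obtain rfl : j = 0 := by simpa using hj
    simpa using hb 0 one_pos 0 one_pos
  | succ m ih =>
    have hm : 2 ^ m < 2 ^ (m + 1) := Nat.pow_lt_pow_succ one_lt_two
    have ih := ih fun j hj c hc => hb j (hj.trans hm) c (hc.trans hm)
    intro j hj
    by_cases hjm : j < 2 ^ m
    · rw [sum_range_succ, bit_eq_zero_of_lt_two_pow hjm le_rfl, zero_mul, add_zero]
      exact ih j hjm
    · obtain ⟨j₁, hj₁, rfl⟩ : ∃ j₁ < 2 ^ m, j = j₁ ^^^ 2 ^ m := by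
        refine ⟨j - 2 ^ m, by rw [pow_succ] at hj; omega, ?_⟩
        rw [Nat.xor_two_pow_eq_add (by rw [pow_succ] at hj; omega)]
        omega
      rw [hb _ (hj₁.trans hm) _ hm, ih _ hj₁]
      simp only [bit_xor, bit_two_pow, add_mul, ite_mul, one_mul, zero_mul, sum_range_succ _ m,
        sum_add_distrib, sum_ite_eq, mem_range, lt_self_iff_false, ↓reduceIte, add_zero,
        bit_eq_zero_of_lt_two_pow hj₁ le_rfl, zero_add]

lemma exists_zdot_eq_of_xor_additive {m : ℕ} {b : ℕ → ZMod 2}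
    (hb : ∀ j < 2 ^ m, ∀ c < 2 ^ m, b (j ^^^ c) = b j + b c) :
    ∃ r < 2 ^ m, ∀ j < 2 ^ m, b j = zdot m r j := by
  obtain ⟨r, hr, hbit⟩ := exists_lt_two_pow_bit_eq m fun t => b (2 ^ t)
  refine ⟨r, hr, fun j hj => ?_⟩
  rw [eq_sum_bit_mul_of_xor_additive hb j hj, zdot]
  exact sum_congr rfl fun t ht => by rw [hbit t (mem_range.mp ht), mul_comm]

lemma exists_hadRow_eq_of_xor_multiplicative {m : ℕ} {χ : ℕ → ℤ}
    (hχ : ∀ j < 2 ^ m, χ j = 1 ∨ χ j = -1)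
    (hmul : ∀ j < 2 ^ m, ∀ c < 2 ^ m, χ (j ^^^ c) = χ j * χ c) :
    ∃ r < 2 ^ m, ∀ j < 2 ^ m, χ j = hadRow m r j := by
  let b : ℕ → ZMod 2 := fun j => if χ j = 1 then 0 else 1
  have hb : ∀ j < 2 ^ m, χ j = (-1) ^ (b j).val := fun j hj => by
    rcases hχ j hj with h | h <;> simp [b, h, ZMod.val_one]
  have hadd : ∀ j < 2 ^ m, ∀ c < 2 ^ m, b (j ^^^ c) = b j + b c := fun j hj c hc => by
    apply ZMod.neg_one_pow_val_injective
    simp only [ZMod.neg_one_pow_val_add, ← hb j hj, ← hb c hc, ← hb _ (Nat.xor_lt_two_pow hj hc),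
      hmul j hj c hc]
  obtain ⟨r, hr, hrow⟩ := exists_zdot_eq_of_xor_additive hadd
  exact ⟨r, hr, fun j hj => by rw [hb j hj, hrow j hj, hadRow]⟩

def IsQuadrupleMultiplicative (m : ℕ) (W : ℕ → ℤ) : Prop :=
  ∀ j < 2 ^ m, ∀ c < 2 ^ m, ∀ l < 2 ^ m, ∀ v < 2 ^ m,
    j ≠ c → j ≠ l → j ≠ v → c ≠ l → c ≠ v → l ≠ v → j ^^^ c ^^^ l ^^^ v = 0 →
      W j * W c = W l * W v

lemma IsQuadrupleMultiplicative.mul_eq_mul_zero_xor {m : ℕ} {W : ℕ → ℤ}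
    (hW : IsQuadrupleMultiplicative m W) (hsq : ∀ j < 2 ^ m, W j ^ 2 = W 0 ^ 2) :
    ∀ j < 2 ^ m, ∀ c < 2 ^ m, W j * W c = W 0 * W (j ^^^ c) := by
  intro j hj c hc
  by_cases hjc : j = c
  · subst hjc
    rw [Nat.xor_self, ← sq, ← sq, hsq j hj]
  by_cases hj0 : j = 0
  · rw [hj0, Nat.zero_xor]
  by_cases hc0 : c = 0
  · rw [hc0, Nat.xor_zero, mul_comm]
  refine hW j hj c hc 0 (Nat.two_pow_pos m) _ (Nat.xor_lt_two_pow hj hc) hjc hj0 ?_ hc0 ?_ ?_ ?_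
  · intro h
    exact hc0 (by simpa using congrArg (j ^^^ ·) h.symm)
  · intro h
    exact hj0 (by simpa using congrArg (· ^^^ c) h.symm)
  · intro h
    exact hjc (by simpa using congrArg (· ^^^ c) h.symm)
  · simp

lemma exists_hadRow_eq_iff_isQuadrupleMultiplicative {m : ℕ} {c : ℤ} (hc : c ≠ 0)
    {W : ℕ → ℤ} (hW : ∀ j < 2 ^ m, W j = 0 ∨ W j = c ∨ W j = -c) :
    (∃ r < 2 ^ m, ∃ ε : ℤ, (ε = 1 ∨ ε = -1) ∧ ∀ j < 2 ^ m, W j = ε * c * hadRow m r j) ↔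
      (∀ j < 2 ^ m, W j ≠ 0) ∧ IsQuadrupleMultiplicative m W := by
  constructor
  · rintro ⟨r, -, ε, hε, hrow⟩
    have hε0 : ε ≠ 0 := by rcases hε with rfl | rfl <;> norm_num
    refine ⟨fun j hj => by
      rw [hrow j hj]; exact mul_ne_zero (mul_ne_zero hε0 hc) (hadRow_ne_zero m r j), ?_⟩
    intro j hj c' hc' l hl v hv _ _ _ _ _ _ hxor
    have hjc : j ^^^ c' = l ^^^ v := by
      rw [Nat.xor_assoc] at hxor
      exact xor_eq_zero_iff.mp hxor
    have hprod : hadRow m r j * hadRow m r c' = hadRow m r l * hadRow m r v := by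
      rw [← hadRow_xor, ← hadRow_xor, hjc]
    rw [hrow j hj, hrow c' hc', hrow l hl, hrow v hv]
    linear_combination (ε * c) ^ 2 * hprod
  · rintro ⟨hne, hquad⟩
    have h0 : 0 < 2 ^ m := Nat.two_pow_pos m
    have hpm : ∀ j < 2 ^ m, W j = c ∨ W j = -c := fun j hj => (hW j hj).resolve_left (hne j hj)
    have hsq : ∀ j < 2 ^ m, W j ^ 2 = W 0 ^ 2 := fun j hj => by
      rcases hpm j hj with h | h <;> rcases hpm 0 h0 with h' | h' <;> rw [h, h'] <;> ring
    have hmulW := hquad.mul_eq_mul_zero_xor hsq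
    let χ : ℕ → ℤ := fun j => if W j = W 0 then 1 else -1
    have hχ : ∀ j < 2 ^ m, W j = χ j * W 0 := fun j hj => by
      have hcc : c ≠ -c := fun h => hc (by linarith)
      rcases hpm j hj with h | h <;> rcases hpm 0 h0 with h' | h' <;> simp [χ, h, h', hcc, hcc.symm]
    have hχpm : ∀ j < 2 ^ m, χ j = 1 ∨ χ j = -1 := fun j _ => by
      simp only [χ]; split_ifs <;> simp
    have hχmul : ∀ j < 2 ^ m, ∀ c' < 2 ^ m, χ (j ^^^ c') = χ j * χ c' := fun j hj c' hc' => by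
      have h := hmulW j hj c' hc'
      rw [hχ j hj, hχ c' hc', hχ _ (Nat.xor_lt_two_pow hj hc')] at h
      apply mul_right_cancel₀ (pow_ne_zero 2 (hne 0 h0))
      linear_combination -h
    obtain ⟨r, hr, hrow⟩ := exists_hadRow_eq_of_xor_multiplicative hχpm hχmul
    obtain ⟨ε, hε, hW0⟩ : ∃ ε : ℤ, (ε = 1 ∨ ε = -1) ∧ W 0 = ε * c := by
      rcases hpm 0 h0 with h | h
      · exact ⟨1, .inl rfl, by rw [h, one_mul]⟩
      · exact ⟨-1, .inr rfl, by rw [h, neg_one_mul]⟩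
    exact ⟨r, hr, ε, hε, fun j hj => by rw [hχ j hj, hrow j hj, hW0]; ring⟩

theorem hadamard_row_iff_walsh_quadruples_odd_general (n k : ℕ)
    (a : ℕ → BF n)
    (hsb : ∀ i < 2 ^ (k - 1), IsSemiBent (component k a i)) (u : Fin n → ZMod 2) :
    (∃ r < 2 ^ (k - 2), ∃ ε : ℤ, (ε = 1 ∨ ε = -1) ∧
        (∀ j < 2 ^ (k - 2),
          walsh (component k a j) u = ε * 2 ^ ((n + 1) / 2) * hadRow (k - 2) r j) ∧
        (∀ j, 2 ^ (k - 2) ≤ j → j < 2 ^ (k - 1) → walsh (component k a j) u = 0)) ↔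
      ((∀ j, 2 ^ (k - 2) ≤ j → j < 2 ^ (k - 1) → walsh (component k a j) u = 0) ∧
        (∀ j < 2 ^ (k - 2), walsh (component k a j) u ≠ 0) ∧
        (∀ j < 2 ^ (k - 2), ∀ c < 2 ^ (k - 2), ∀ l < 2 ^ (k - 2), ∀ v < 2 ^ (k - 2),
          j ≠ c → j ≠ l → j ≠ v → c ≠ l → c ≠ v → l ≠ v → j ^^^ c ^^^ l ^^^ v = 0 →
          walsh (component k a j) u * walsh (component k a c) u =
            walsh (component k a l) u * walsh (component k a v) u)) := by
  have key := exists_hadRow_eq_iff_isQuadrupleMultiplicative (m := k - 2)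
    (W := fun j => walsh (component k a j) u) (by positivity : (2 : ℤ) ^ ((n + 1) / 2) ≠ 0)
    fun j hj => hsb j (hj.trans_le (Nat.pow_le_pow_right two_pos (by omega))) u
  constructor
  · rintro ⟨r, hr, ε, hε, hrow, hzero⟩
    exact ⟨hzero, key.mp ⟨r, hr, ε, hε, hrow⟩⟩
  · rintro ⟨hzero, hrest⟩
    obtain ⟨r, hr, ε, hε, hrow⟩ := key.mpr hrest
    exact ⟨r, hr, ε, hε, hrow, hzero⟩

/-- Proposition 2(ii): for odd `n` and semi-bent component functions, the Walsh spectrum vector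
at `u` equals `(± 2^{(n+1)/2} H_{2^{k-2}}^{(r)}, 0)` iff the second half vanishes, the first half
is nonzero, and the quadruple condition holds on the first half. -/
theorem hadamard_row_iff_walsh_quadruples_odd (n k : ℕ) (hn : Odd n) (hk : 3 ≤ k)
    (a : ℕ → BF n) (f : (Fin n → ZMod 2) → ZMod (2 ^ k)) (hf : coordExpand k a f)
    (hsb : ∀ i < 2 ^ (k - 1), IsSemiBent (component k a i)) (u : Fin n → ZMod 2) :
    (∃ r < 2 ^ (k - 2), ∃ ε : ℤ, (ε = 1 ∨ ε = -1) ∧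
        (∀ j < 2 ^ (k - 2),
          walsh (component k a j) u = ε * 2 ^ ((n + 1) / 2) * hadRow (k - 2) r j) ∧
        (∀ j, 2 ^ (k - 2) ≤ j → j < 2 ^ (k - 1) → walsh (component k a j) u = 0)) ↔
      ((∀ j, 2 ^ (k - 2) ≤ j → j < 2 ^ (k - 1) → walsh (component k a j) u = 0) ∧
        (∀ j < 2 ^ (k - 2), walsh (component k a j) u ≠ 0) ∧
        (∀ j < 2 ^ (k - 2), ∀ c < 2 ^ (k - 2), ∀ l < 2 ^ (k - 2), ∀ v < 2 ^ (k - 2),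
          j ≠ c → j ≠ l → j ≠ v → c ≠ l → c ≠ v → l ≠ v → j ^^^ c ^^^ l ^^^ v = 0 →
          walsh (component k a j) u * walsh (component k a c) u =
            walsh (component k a l) u * walsh (component k a v) u)) :=
  hadamard_row_iff_walsh_quadruples_odd_general n k a hsb u
end

section
/- Let n be odd and let g₀, g₁, g₂, g₃ : 𝔽₂ⁿ → 𝔽₂ be semi-bent functions with g₀ ⊕ g₁ ⊕ g₂ ⊕ g₃ = 0. Then g₀g₁ ⊕ g₀g₂ ⊕ g₁g₂ is semi-bent if and only if for all u ∈ 𝔽₂ⁿ: the number of i ∈ {0,1,2,3} with W_{g_i}(u) = 0 is even, and whenever W_{g_i}(u) ≠ 0 for all i ∈ {0,1,2,3}, either W_{g₀}(u)·W_{g₁}(u) = W_{g₂}(u)·W_{g₃}(u), or the number of i ∈ {0,1,2,3} with W_{g_i}(u) = 2^{(n+1)/2} is odd (i.e., 1 or 3) but not W_{g₀}(u) = W_{g₁}(u) = W_{g₂}(u). -/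
open Finset

/-!
Pointwise, `2 (-1)^{g₀g₁ ⊕ g₀g₂ ⊕ g₁g₂} = (-1)^{g₀} + (-1)^{g₁} + (-1)^{g₂} - (-1)^{g₀ ⊕ g₁ ⊕ g₂}`,
so with `g₃ = g₀ ⊕ g₁ ⊕ g₂` the majority function has Walsh transform
`(W₀ + W₁ + W₂ - W₃) / 2`. Writing `Wᵢ = sᵢ 2^{(n+1)/2}` with signs `sᵢ ∈ {0, ±1}`, semi-bentness of
the majority function becomes a condition on the 81 sign patterns, checked by evaluation.
-/

theorem two_mul_neg_one_pow_majority (a b c e : ZMod 2) :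
    2 * (-1 : ℤ) ^ (a * b + a * c + b * c + e).val =
      (-1) ^ (a + e).val + (-1) ^ (b + e).val + (-1) ^ (c + e).val
        - (-1) ^ (a + b + c + e).val := by
  revert a b c e; decide

theorem two_mul_walsh_majority {n : ℕ} (g₀ g₁ g₂ g₃ : BF n)
    (hsum : ∀ x, g₀ x + g₁ x + g₂ x + g₃ x = 0) (u : Fin n → ZMod 2) :
    2 * walsh (fun x => g₀ x * g₁ x + g₀ x * g₂ x + g₁ x * g₂ x) u
      = walsh g₀ u + walsh g₁ u + walsh g₂ u - walsh g₃ u := by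
  have hg₃ : g₃ = fun x => g₀ x + g₁ x + g₂ x :=
    funext fun x => (eq_neg_of_add_eq_zero_right (hsum x)).trans (CharTwo.neg_eq _)
  subst hg₃
  simp only [walsh, Finset.mul_sum, ← Finset.sum_add_distrib, ← Finset.sum_sub_distrib]
  exact Finset.sum_congr rfl fun x _ => two_mul_neg_one_pow_majority _ _ _ _

/-- `W i` stands for `W_{gᵢ}(u)` and `c` for `2^{(n+1)/2}`. -/
def QuadrupleCondition (c : ℤ) (W : Fin 4 → ℤ) : Prop :=
  Even #{i | W i = 0} ∧
    ((∀ i, W i ≠ 0) →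
      W 0 * W 1 = W 2 * W 3 ∨
        ((#{i | W i = c} = 1 ∨ #{i | W i = c} = 3) ∧ ¬(W 0 = W 1 ∧ W 1 = W 2)))

theorem quadrupleCondition_mul_const {c : ℤ} (hc : c ≠ 0) (s : Fin 4 → ℤ) :
    QuadrupleCondition c (fun i => s i * c) ↔ QuadrupleCondition 1 s := by
  have hcc : c * c ≠ 0 := mul_ne_zero hc hc
  simp only [QuadrupleCondition, mul_eq_zero, hc, or_false, mul_eq_right₀ hc, mul_left_inj' hc,
    mul_mul_mul_comm _ c _ c, mul_left_inj' hcc, ne_eq]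

theorem quadrupleCondition_signs (s : Fin 4 → SignType) :
    (∃ t : SignType, 2 * (t : ℤ) = s 0 + s 1 + s 2 - s 3) ↔
      QuadrupleCondition 1 fun i => (s i : ℤ) := by
  unfold QuadrupleCondition; revert s; decide

theorem eq_zero_or_eq_or_eq_neg_iff_exists_signType (w c : ℤ) :
    (w = 0 ∨ w = c ∨ w = -c) ↔ ∃ t : SignType, w = t * c := by
  constructor
  · rintro (rfl | rfl | rfl)
    exacts [⟨0, by simp⟩, ⟨1, by simp⟩, ⟨-1, by simp⟩]
  · rintro ⟨t, rfl⟩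
    cases t <;> simp

theorem half_sum_mem_iff_quadrupleCondition {c : ℤ} (hc : c ≠ 0) {W : Fin 4 → ℤ}
    (hW : ∀ i, W i = 0 ∨ W i = c ∨ W i = -c) {w : ℤ} (hw : 2 * w = W 0 + W 1 + W 2 - W 3) :
    (w = 0 ∨ w = c ∨ w = -c) ↔ QuadrupleCondition c W := by
  choose s hs using fun i => (eq_zero_or_eq_or_eq_neg_iff_exists_signType (W i) c).mp (hW i)
  obtain rfl : W = fun i => (s i : ℤ) * c := funext hs
  rw [quadrupleCondition_mul_const hc, ← quadrupleCondition_signs,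
    eq_zero_or_eq_or_eq_neg_iff_exists_signType]
  refine exists_congr fun t => ⟨fun ht => ?_, fun ht => ?_⟩
  · apply mul_right_cancel₀ hc
    linear_combination hw - 2 * ht
  · apply mul_left_cancel₀ (two_ne_zero (α := ℤ))
    linear_combination hw - c * ht

theorem semibent_quadruple_secondary_construction_general (n : ℕ) (g₀ g₁ g₂ g₃ : BF n)
    (hs₀ : IsSemiBent g₀) (hs₁ : IsSemiBent g₁) (hs₂ : IsSemiBent g₂) (hs₃ : IsSemiBent g₃)
    (hsum : ∀ x, g₀ x + g₁ x + g₂ x + g₃ x = 0) :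
    IsSemiBent (fun x => g₀ x * g₁ x + g₀ x * g₂ x + g₁ x * g₂ x) ↔
      ∀ u,
        Even ((Finset.univ.filter fun i : Fin 4 =>
          ![walsh g₀ u, walsh g₁ u, walsh g₂ u, walsh g₃ u] i = 0).card) ∧
        ((∀ i : Fin 4, ![walsh g₀ u, walsh g₁ u, walsh g₂ u, walsh g₃ u] i ≠ 0) →
          (walsh g₀ u * walsh g₁ u = walsh g₂ u * walsh g₃ u ∨
            (((Finset.univ.filter fun i : Fin 4 =>
                  ![walsh g₀ u, walsh g₁ u, walsh g₂ u, walsh g₃ u] i =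
                    2 ^ ((n + 1) / 2)).card = 1 ∨
              (Finset.univ.filter fun i : Fin 4 =>
                  ![walsh g₀ u, walsh g₁ u, walsh g₂ u, walsh g₃ u] i =
                    2 ^ ((n + 1) / 2)).card = 3) ∧
              ¬(walsh g₀ u = walsh g₁ u ∧ walsh g₁ u = walsh g₂ u)))) := by
  have hc : (2 : ℤ) ^ ((n + 1) / 2) ≠ 0 := by positivity
  refine forall_congr' fun u => half_sum_mem_iff_quadrupleCondition hc ?_
    (two_mul_walsh_majority g₀ g₁ g₂ g₃ hsum u)
  intro i
  fin_cases i
  exacts [hs₀ u, hs₁ u, hs₂ u, hs₃ u]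

/-- Proposition 4: the semi-bent analogue of the secondary construction. -/
theorem semibent_quadruple_secondary_construction (n : ℕ) (hn : Odd n) (g₀ g₁ g₂ g₃ : BF n)
    (hs₀ : IsSemiBent g₀) (hs₁ : IsSemiBent g₁) (hs₂ : IsSemiBent g₂) (hs₃ : IsSemiBent g₃)
    (hsum : ∀ x, g₀ x + g₁ x + g₂ x + g₃ x = 0) :
    IsSemiBent (fun x => g₀ x * g₁ x + g₀ x * g₂ x + g₁ x * g₂ x) ↔
      ∀ u,
        Even ((Finset.univ.filter fun i : Fin 4 =>
          ![walsh g₀ u, walsh g₁ u, walsh g₂ u, walsh g₃ u] i = 0).card) ∧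
        ((∀ i : Fin 4, ![walsh g₀ u, walsh g₁ u, walsh g₂ u, walsh g₃ u] i ≠ 0) →
          (walsh g₀ u * walsh g₁ u = walsh g₂ u * walsh g₃ u ∨
            (((Finset.univ.filter fun i : Fin 4 =>
                  ![walsh g₀ u, walsh g₁ u, walsh g₂ u, walsh g₃ u] i =
                    2 ^ ((n + 1) / 2)).card = 1 ∨
              (Finset.univ.filter fun i : Fin 4 =>
                  ![walsh g₀ u, walsh g₁ u, walsh g₂ u, walsh g₃ u] i =
                    2 ^ ((n + 1) / 2)).card = 3) ∧
              ¬(walsh g₀ u = walsh g₁ u ∧ walsh g₁ u = walsh g₂ u)))) :=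
  semibent_quadruple_secondary_construction_general n g₀ g₁ g₂ g₃ hs₀ hs₁ hs₂ hs₃ hsum
end

section
/- Let k ≥ 2, f : 𝔽₂ⁿ → ℤ_{2^k} with coordinate functions a₀,…,a_{k−1} and component functions g₀,…,g_{2^{k−1}−1}, and let ζ = exp(2πi/2^k). Define complex numbers α_i = 2^{−(k−1)} ∑_{j=0}^{2^{k−1}−1} (−1)^{z_i·z_j} ζ^j for 0 ≤ i ≤ 2^{k−1}−1. Then (1) for every x ∈ 𝔽₂ⁿ, ζ^{f(x)} = ∑_{i=0}^{2^{k−1}−1} α_i (−1)^{g_i(x)}, and (2) for every u ∈ 𝔽₂ⁿ, H_f(u) = ∑_{i=0}^{2^{k−1}−1} α_i W_{g_i}(u). -/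
/-! Write `f x = M + 2^(k-1) a_{k-1}(x)`, where `M < 2^(k-1)` is the number with binary digits
`a_0(x), …, a_{k-2}(x)`. Since `ζ^(2^(k-1)) = -1`, this gives `ζ^(f x) = (-1)^{a_{k-1}(x)} ζ^M`,
while `(-1)^{g_i(x)} = (-1)^{a_{k-1}(x)} (-1)^{z_i·z_M}`. So (1) reduces to
`∑_i α_i (-1)^{z_i·z_M} = ζ^M`: the vector `α` is `2^{-(k-1)} H (ζ^j)_j` for the Sylvester–Hadamard
matrix `H`, and `H² = 2^{k-1} I` because the character sum `∑_i (-1)^{z_i·c}` vanishes unless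
`c = 0`. Part (2) follows from (1) by linearity of the transforms in `x ↦ ζ^(f x)`. -/

open Finset

/-- The coefficient `α_i = 2^{-(k-1)} ∑_j (-1)^{z_i·z_j} ζ^j`. -/
noncomputable def alphaCoef (k i : ℕ) : ℂ :=
  ((2 : ℂ) ^ (k - 1))⁻¹ *
    ∑ j ∈ Finset.range (2 ^ (k - 1)),
      (hadRow (k - 1) i j : ℂ) * Complex.exp (2 * Real.pi * Complex.I / ((2 ^ k : ℕ) : ℂ)) ^ j

local notation "ζ" k:max => Complex.exp (2 * Real.pi * Complex.I / ((2 ^ k : ℕ) : ℂ))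

theorem zmod_two_eq_zero_or_eq_one (c : ZMod 2) : c = 0 ∨ c = 1 := by
  revert c; decide

theorem neg_one_pow_val_add {R : Type*} [Ring R] (a b : ZMod 2) :
    (-1 : R) ^ (a + b).val = (-1) ^ a.val * (-1) ^ b.val := by
  rw [ZMod.val_add, ← neg_one_pow_eq_pow_mod_two, pow_add]

theorem one_add_neg_one_pow_val (c : ZMod 2) : 1 + (-1 : ℤ) ^ c.val = if c = 0 then 2 else 0 := by
  rcases zmod_two_eq_zero_or_eq_one c with rfl | rfl <;> simp [ZMod.val_one]

theorem bit_eq_bit_iff {t i j : ℕ} : bit t i = bit t j ↔ i.testBit t = j.testBit t := by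
  unfold bit; split_ifs <;> simp_all

theorem bit_eq_zero_of_lt_two_pow_s15 {m i : ℕ} (hi : i < 2 ^ m) : bit m i = 0 := by
  simp [bit, Nat.testBit_lt_two_pow hi]

theorem bit_two_pow_add_self {m i : ℕ} (hi : i < 2 ^ m) : bit m (2 ^ m + i) = 1 := by
  simp [bit, Nat.testBit_two_pow_add_eq, Nat.testBit_lt_two_pow hi]

theorem bit_two_pow_add_of_lt {t m : ℕ} (ht : t < m) (i : ℕ) : bit t (2 ^ m + i) = bit t i := by
  simp [bit, Nat.testBit_two_pow_add_gt ht]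

theorem eq_iff_forall_bit_eq {m i j : ℕ} (hi : i < 2 ^ m) (hj : j < 2 ^ m) :
    i = j ↔ ∀ t < m, bit t i = bit t j := by
  refine ⟨fun h _ _ => h ▸ rfl, fun h => Nat.eq_of_testBit_eq fun t => ?_⟩
  rcases lt_or_ge t m with ht | ht
  · exact bit_eq_bit_iff.1 (h t ht)
  · have hpow : 2 ^ m ≤ 2 ^ t := Nat.pow_le_pow_right two_pos ht
    rw [Nat.testBit_lt_two_pow (hi.trans_le hpow), Nat.testBit_lt_two_pow (hj.trans_le hpow)]

def binVal (m : ℕ) (b : ℕ → ZMod 2) : ℕ := ∑ j ∈ range m, 2 ^ j * (b j).val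

theorem binVal_succ (m : ℕ) (b : ℕ → ZMod 2) : binVal (m + 1) b = binVal m b + 2 ^ m * (b m).val :=
  sum_range_succ _ _

theorem binVal_lt_two_pow (m : ℕ) (b : ℕ → ZMod 2) : binVal m b < 2 ^ m := by
  induction m with
  | zero => simp [binVal]
  | succ m ih =>
    have : (b m).val ≤ 1 := Nat.le_of_lt_succ (ZMod.val_lt _)
    rw [binVal_succ, pow_succ]
    nlinarith

theorem bit_binVal {t m : ℕ} (ht : t < m) (b : ℕ → ZMod 2) : bit t (binVal m b) = b t := by
  induction m with
  | zero => omega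
  | succ m ih =>
    rw [binVal_succ]
    obtain hbm | hbm := zmod_two_eq_zero_or_eq_one (b m)
    · rw [hbm, ZMod.val_zero, mul_zero, add_zero]
      rcases Nat.lt_succ_iff_lt_or_eq.1 ht with ht | rfl
      · exact ih ht
      · rw [hbm, bit_eq_zero_of_lt_two_pow_s15 (binVal_lt_two_pow t b)]
    · rw [hbm, ZMod.val_one, mul_one, add_comm]
      rcases Nat.lt_succ_iff_lt_or_eq.1 ht with ht | rfl
      · rw [bit_two_pow_add_of_lt ht, ih ht]
      · rw [hbm, bit_two_pow_add_self (binVal_lt_two_pow t b)]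

theorem sum_neg_one_pow_bit_mul (m : ℕ) (c : ℕ → ZMod 2) :
    ∑ i ∈ range (2 ^ m), (-1 : ℤ) ^ (∑ t ∈ range m, bit t i * c t).val =
      ∏ t ∈ range m, (1 + (-1) ^ (c t).val) := by
  induction m with
  | zero => simp
  | succ m ih =>
    have low : ∑ i ∈ range (2 ^ m), (-1 : ℤ) ^ (∑ t ∈ range (m + 1), bit t i * c t).val =
        ∑ i ∈ range (2 ^ m), (-1 : ℤ) ^ (∑ t ∈ range m, bit t i * c t).val :=
      sum_congr rfl fun i hi => by
        simp [sum_range_succ, bit_eq_zero_of_lt_two_pow_s15 (mem_range.1 hi)]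
    have high : ∑ i ∈ range (2 ^ m), (-1 : ℤ) ^ (∑ t ∈ range (m + 1), bit t (2 ^ m + i) * c t).val =
        (-1) ^ (c m).val * ∑ i ∈ range (2 ^ m), (-1 : ℤ) ^ (∑ t ∈ range m, bit t i * c t).val := by
      rw [mul_sum]
      refine sum_congr rfl fun i hi => ?_
      have hshift : ∀ t ∈ range m, bit t (2 ^ m + i) * c t = bit t i * c t := fun t ht => by
        rw [bit_two_pow_add_of_lt (mem_range.1 ht)]
      rw [sum_range_succ, sum_congr rfl hshift, bit_two_pow_add_self (mem_range.1 hi), one_mul,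
        neg_one_pow_val_add, mul_comm]
    -- split `i < 2 ^ (m + 1)` according to its top bit `m`
    rw [pow_succ, mul_two, sum_range_add, low, high, ih, prod_range_succ]
    ring

theorem sum_neg_one_pow_bit_mul_eq_ite (m : ℕ) (c : ℕ → ZMod 2) :
    ∑ i ∈ range (2 ^ m), (-1 : ℤ) ^ (∑ t ∈ range m, bit t i * c t).val =
      if ∀ t ∈ range m, c t = 0 then 2 ^ m else 0 := by
  simp_rw [sum_neg_one_pow_bit_mul, one_add_neg_one_pow_val, prod_ite_zero, prod_const, card_range]

theorem hadRow_mul_hadRow (m i j l : ℕ) :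
    hadRow m i j * hadRow m i l = (-1) ^ (∑ t ∈ range m, bit t i * (bit t j + bit t l)).val := by
  simp_rw [hadRow, zdot, ← neg_one_pow_val_add, ← sum_add_distrib, mul_add]

theorem sum_hadRow_mul_hadRow {m j l : ℕ} (hj : j < 2 ^ m) (hl : l < 2 ^ m) :
    ∑ i ∈ range (2 ^ m), hadRow m i j * hadRow m i l = if j = l then 2 ^ m else 0 := by
  simp_rw [hadRow_mul_hadRow, sum_neg_one_pow_bit_mul_eq_ite, CharTwo.add_eq_zero, mem_range,
    ← eq_iff_forall_bit_eq hj hl]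

theorem isPrimitiveRoot_zeta (k : ℕ) : IsPrimitiveRoot (ζ k) (2 ^ k) :=
  Complex.isPrimitiveRoot_exp _ (by positivity)

theorem zeta_pow_val_natCast (k N : ℕ) : (ζ k) ^ (N : ZMod (2 ^ k)).val = (ζ k) ^ N := by
  have h := pow_mod_orderOf (ζ k) N
  rwa [← (isPrimitiveRoot_zeta k).eq_orderOf, ← ZMod.val_natCast] at h

theorem zeta_succ_pow_two_pow (m : ℕ) : (ζ (m + 1)) ^ 2 ^ m = -1 := by
  refine IsPrimitiveRoot.eq_neg_one_of_two_right ?_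
  simpa [pow_succ] using (isPrimitiveRoot_zeta (m + 1)).pow_of_dvd (by positivity)
    (pow_dvd_pow 2 m.le_succ)

theorem sum_alphaCoef_mul_hadRow {m M : ℕ} (hM : M < 2 ^ m) :
    ∑ i ∈ range (2 ^ m), alphaCoef (m + 1) i * hadRow m i M = (ζ (m + 1)) ^ M := by
  calc ∑ i ∈ range (2 ^ m), alphaCoef (m + 1) i * hadRow m i M
      = ((2 : ℂ) ^ m)⁻¹ * ∑ j ∈ range (2 ^ m), (ζ (m + 1)) ^ j *
          ((∑ i ∈ range (2 ^ m), hadRow m i j * hadRow m i M : ℤ) : ℂ) := by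
        simp only [alphaCoef, Nat.add_sub_cancel, mul_assoc, Int.cast_sum, Int.cast_mul, sum_mul,
          mul_sum]
        rw [sum_comm]
        exact sum_congr rfl fun _ _ => sum_congr rfl fun _ _ => by ring
    _ = ((2 : ℂ) ^ m)⁻¹ * ((ζ (m + 1)) ^ M * 2 ^ m) := by
        rw [sum_congr rfl fun j hj => by rw [sum_hadRow_mul_hadRow (mem_range.1 hj) hM]]
        simp [hM]
    _ = (ζ (m + 1)) ^ M := by field_simp

theorem zeta_pow_eq_sum_alphaCoef_mul_neg_one_pow_component {n k : ℕ} (hk : k ≠ 0)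
    {a : ℕ → BF n} {f : (Fin n → ZMod 2) → ZMod (2 ^ k)} (hf : coordExpand k a f)
    (x : Fin n → ZMod 2) :
    (ζ k) ^ (f x).val =
      ∑ i ∈ range (2 ^ (k - 1)), alphaCoef k i * (-1 : ℂ) ^ (component k a i x).val := by
  obtain ⟨m, rfl⟩ : ∃ m, k = m + 1 := ⟨k - 1, by omega⟩
  simp only [Nat.add_sub_cancel]
  set M := binVal m (a · x)
  have hfx : f x = ((M + 2 ^ m * (a m x).val : ℕ) : ZMod (2 ^ (m + 1))) := by
    rw [hf x, sum_range_succ]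
    simp [M, binVal]
  have hcomponent : ∀ i, (-1 : ℂ) ^ (component (m + 1) a i x).val =
      (-1) ^ (a m x).val * hadRow m i M := fun i => by
    have hdot : ∑ t ∈ range m, bit t i * a t x = zdot m i M :=
      sum_congr rfl fun t ht => by rw [bit_binVal (mem_range.1 ht)]
    rw [component, Nat.add_sub_cancel, hdot, neg_one_pow_val_add, hadRow, Int.cast_pow,
      Int.cast_neg, Int.cast_one]
  calc (ζ (m + 1)) ^ (f x).val = (-1) ^ (a m x).val * (ζ (m + 1)) ^ M := by
        rw [hfx, zeta_pow_val_natCast, pow_add, pow_mul, zeta_succ_pow_two_pow, mul_comm]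
    _ = (-1) ^ (a m x).val *
          ∑ i ∈ range (2 ^ m), alphaCoef (m + 1) i * hadRow m i M := by
        rw [sum_alphaCoef_mul_hadRow (binVal_lt_two_pow _ _)]
    _ = _ := by
        rw [mul_sum]
        exact sum_congr rfl fun i _ => by rw [hcomponent]; ring

theorem walsh_eq_sum_neg_one_pow_mul {n : ℕ} (g : BF n) (u : Fin n → ZMod 2) :
    (walsh g u : ℂ) = ∑ x, (-1 : ℂ) ^ (g x).val * (-1) ^ (bdot u x).val := by
  simp [walsh, neg_one_pow_val_add]

theorem gwht_eq_sum_mul_walsh {n q : ℕ} {f : (Fin n → ZMod 2) → ZMod q} {ι : Type*}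
    (s : Finset ι) (c : ι → ℂ) (g : ι → BF n)
    (hf : ∀ x, Complex.exp (2 * Real.pi * Complex.I / (q : ℂ)) ^ (f x).val =
      ∑ i ∈ s, c i * (-1 : ℂ) ^ (g i x).val) (u : Fin n → ZMod 2) :
    gwht f u = ∑ i ∈ s, c i * (walsh (g i) u : ℂ) := by
  simp_rw [gwht, hf, walsh_eq_sum_neg_one_pow_mul, sum_mul, mul_sum, mul_assoc]
  exact sum_comm

/-- Theorem 5: (1) `ζ^{f(x)} = ∑_i α_i (-1)^{g_i(x)}` and (2) `H_f(u) = ∑_i α_i W_{g_i}(u)`. -/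
theorem zeta_pow_eq_sum_alpha_components (n k : ℕ) (hk : 2 ≤ k) (a : ℕ → BF n)
    (f : (Fin n → ZMod 2) → ZMod (2 ^ k)) (hf : coordExpand k a f) :
    (∀ x, Complex.exp (2 * Real.pi * Complex.I / ((2 ^ k : ℕ) : ℂ)) ^ (f x).val =
        ∑ i ∈ Finset.range (2 ^ (k - 1)),
          alphaCoef k i * (-1 : ℂ) ^ (component k a i x).val) ∧
      (∀ u, gwht f u =
        ∑ i ∈ Finset.range (2 ^ (k - 1)),
          alphaCoef k i * (walsh (component k a i) u : ℂ)) := by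
  have hpoint := zeta_pow_eq_sum_alphaCoef_mul_neg_one_pow_component (by omega) hf
  exact ⟨hpoint, gwht_eq_sum_mul_walsh _ _ _ hpoint⟩
end
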